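/- Let 1 < p < ∞ and α > −1. Assume ω is a weight on the upper half-plane H and Φ is a normalized Young function in the class B_p. Then there is a constant C > 0, depending only on p and Φ, such that for every compactly supported measurable function f, (∫_H (M^d_{Φ,ω,α} f(z))^p ω(z) dV_α(z))^{1/p} ≤ C (∫_H |f(z)|^p ω(z) dV_α(z))^{1/p}. -/

import Mathlib

open MeasureTheory Set Filter
open scoped ENNReal NNReal

noncomputable section

/-- The upper half-plane `H = {z : 0 < Im z}`. -/
def UHP : Set ℂ := {z : ℂ | 0 < z.im}

/-- The measure `dV_α = y^α dx dy` supported on the upper half-plane. -/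
def Vm (α : ℝ) : Measure ℂ :=
  MeasureTheory.volume.withDensity
    (fun z => if 0 < z.im then ENNReal.ofReal (z.im ^ α) else 0)

/-- The Carleson square `Q_I` attached to the interval `I = (a, b)`. -/
def Qbox (a b : ℝ) : Set ℂ :=
  {z : ℂ | z.re ∈ Set.Ioo a b ∧ z.im ∈ Set.Ioo 0 (b - a)}

/-- The weighted measure `|E|_{ω,α} = ∫_E ω dV_α` of a set `E`. -/
def wvol (α : ℝ) (ω : ℂ → ℝ) (E : Set ℂ) : ℝ≥0∞ :=
  ∫⁻ z in E, ENNReal.ofReal (ω z) ∂(Vm α)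

/-- A weight: a nonnegative locally integrable function on the upper half-plane. -/
def IsWeight (α : ℝ) (ω : ℂ → ℝ) : Prop :=
  Measurable ω ∧ (∀ z, 0 ≤ ω z) ∧ MeasureTheory.LocallyIntegrableOn ω UHP (Vm α)

/-- A normalized Young function: continuous, convex, increasing on `[0,∞)`,
with `Φ 0 = 0`, `Φ 1 = 1` and `Φ t → ∞` as `t → ∞`. -/
structure IsNormalizedYoung (Φ : ℝ → ℝ) : Prop where
  cont : ContinuousOn Φ (Set.Ici 0)
  convex : ConvexOn ℝ (Set.Ici 0) Φ
  mono : MonotoneOn Φ (Set.Ici 0)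
  map_zero : Φ 0 = 0
  map_one : Φ 1 = 1
  tendsto_atTop : Filter.Tendsto Φ Filter.atTop Filter.atTop

/-- The `Δ₂` (doubling) condition with constant `K`. -/
def Delta2 (Φ : ℝ → ℝ) (K : ℝ) : Prop :=
  1 < K ∧ ∀ t : ℝ, 0 ≤ t → Φ (2 * t) ≤ K * Φ t

/-- The class `B_p`: `Δ₂` together with `∫_c^∞ Φ(t)/t^p dt/t < ∞` for some `c > 0`. -/
def InBp (Φ : ℝ → ℝ) (p : ℝ) : Prop :=
  (∃ K : ℝ, Delta2 Φ K) ∧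
    ∃ c : ℝ, 0 < c ∧ (∫⁻ t in Set.Ioi c, ENNReal.ofReal (Φ t / t ^ (p + 1))) < ⊤

/-- The Luxemburg norm `‖f‖_{Q_I, Φ, ω, α}` over the Carleson square of `I = (a,b)`. -/
def luxNorm (α : ℝ) (Φ : ℝ → ℝ) (ω : ℂ → ℝ) (a b : ℝ) (f : ℂ → ℂ) : ℝ≥0∞ :=
  ⨅ (t : ℝ) (_ : 0 < t)
    (_ : (∫⁻ z in Qbox a b, ENNReal.ofReal (Φ (‖f z‖ / t) * ω z) ∂(Vm α)) /
          wvol α ω (Qbox a b) ≤ 1),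
    ENNReal.ofReal t

/-- The maximal function `M_{Φ,ω,α} f`. -/
def maxFn (α : ℝ) (Φ : ℝ → ℝ) (ω : ℂ → ℝ) (f : ℂ → ℂ) (z : ℂ) : ℝ≥0∞ :=
  ⨆ (a : ℝ) (b : ℝ) (_ : z ∈ Qbox a b), luxNorm α Φ ω a b f

/-- The dyadic grid `D^β`, as a set of pairs of endpoints. -/
def dyadicGrid (β : ℝ) : Set (ℝ × ℝ) :=
  {I : ℝ × ℝ | ∃ j m : ℤ, I.1 = (2 : ℝ) ^ j * (m + (-1 : ℝ) ^ j * β) ∧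
    I.2 = (2 : ℝ) ^ j * (m + 1 + (-1 : ℝ) ^ j * β)}

/-- The dyadic maximal function `M^{d,β}_{Φ,ω,α} f`. -/
def dyadicMax (β α : ℝ) (Φ : ℝ → ℝ) (ω : ℂ → ℝ) (f : ℂ → ℂ) (z : ℂ) : ℝ≥0∞ :=
  ⨆ (I : ℝ × ℝ) (_ : I ∈ dyadicGrid β) (_ : z ∈ Qbox I.1 I.2),
    luxNorm α Φ ω I.1 I.2 f

/-- The Hardy–Littlewood maximal function `M_α g` of the upper half-plane. -/
def hlMax (α : ℝ) (g : ℂ → ℝ) (z : ℂ) : ℝ≥0∞ :=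
  ⨆ (a : ℝ) (b : ℝ) (_ : z ∈ Qbox a b),
    (∫⁻ w in Qbox a b, ENNReal.ofReal |g w| ∂(Vm α)) / Vm α (Qbox a b)

/-- The weighted Hardy–Littlewood maximal function `M_{ω,α} f`. -/
def whlMax (α : ℝ) (ω : ℂ → ℝ) (f : ℂ → ℂ) (z : ℂ) : ℝ≥0∞ :=
  ⨆ (a : ℝ) (b : ℝ) (_ : z ∈ Qbox a b),
    (∫⁻ w in Qbox a b, ENNReal.ofReal (‖f w‖ * ω w) ∂(Vm α)) /
      wvol α ω (Qbox a b)

/-- The Békollè–Bonami constant `[ω]_{B_{p,α}}`. -/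
def BBnorm (α p : ℝ) (ω : ℂ → ℝ) : ℝ≥0∞ :=
  ⨆ (a : ℝ) (b : ℝ) (_ : a < b),
    (wvol α ω (Qbox a b) / Vm α (Qbox a b)) *
      ((∫⁻ z in Qbox a b, ENNReal.ofReal (ω z) ^ (1 - p / (p - 1)) ∂(Vm α)) /
          Vm α (Qbox a b)) ^ (p - 1)

/-- Membership in the Békollè–Bonami class `B_{p,α}`. -/
def InBB (α p : ℝ) (ω : ℂ → ℝ) : Prop := BBnorm α p ω < ⊤

/-- Membership in `𝔹_{∞,α} = ⋃_{p>1} B_{p,α}`. -/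
def InBBinfty (α : ℝ) (ω : ℂ → ℝ) : Prop := ∃ p : ℝ, 1 < p ∧ InBB α p ω

/-- The quantity `∫_H |f|^p ω dV_α`. -/
def lpInt (α p : ℝ) (ω : ℂ → ℝ) (f : ℂ → ℂ) : ℝ≥0∞ :=
  ∫⁻ z, ENNReal.ofReal ‖f z‖ ^ p * ENNReal.ofReal (ω z) ∂(Vm α)

/-- The function `K_μ(z) = sup_{I : z ∈ Q_I} μ(Q_I)/|Q_I|_{ω,α}`. -/
def Kmu (α : ℝ) (ω : ℂ → ℝ) (μ : Measure ℂ) (z : ℂ) : ℝ≥0∞ :=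
  ⨆ (a : ℝ) (b : ℝ) (_ : z ∈ Qbox a b), μ (Qbox a b) / wvol α ω (Qbox a b)

/-- `ω` is `α`-doubling with doubling function `φ` and constant `K`. -/
structure AlphaDoubling (α : ℝ) (ω : ℂ → ℝ) (φ : ℝ≥0∞ → ℝ≥0∞) (K : ℝ≥0∞) : Prop where
  mono : Monotone φ
  map_one : φ 1 = 1
  one_le : 1 ≤ K
  bound : ∀ a b : ℝ, ∀ E ⊆ Qbox a b, MeasurableSet E →
    wvol α ω (Qbox a b) / wvol α ω E ≤ K * φ (Vm α (Qbox a b) / Vm α E)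

/-- The complementary (conjugate) Young function `Ψ(s) = sup_{t ≥ 0} (t s − Φ(t))`,
valued in `ℝ≥0∞`. -/
def conjugateYoung (Φ : ℝ → ℝ) (s : ℝ) : ℝ≥0∞ :=
  ⨆ (t : ℝ) (_ : 0 ≤ t), ENNReal.ofReal (t * s - Φ t)

/-- The unweighted Luxemburg norm for an `ℝ≥0∞`-valued Young function. -/
def luxNormE (α : ℝ) (Ψ : ℝ → ℝ≥0∞) (a b : ℝ) (g : ℂ → ℝ) : ℝ≥0∞ :=
  ⨅ (t : ℝ) (_ : 0 < t)
    (_ : (∫⁻ z in Qbox a b, Ψ (|g z| / t) ∂(Vm α)) / Vm α (Qbox a b) ≤ 1),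
    ENNReal.ofReal t

/-- The Békollè–Bonami `B_{∞,α}` constant
`[ω]_{B_{∞,α}} = sup_I |Q_I|_{ω,α}⁻¹ ∫_{Q_I} M_α(ω χ_{Q_I}) dV_α`. -/
def BBinftyNorm (α : ℝ) (ω : ℂ → ℝ) : ℝ≥0∞ :=
  ⨆ (a : ℝ) (b : ℝ) (_ : a < b),
    (∫⁻ z in Qbox a b, hlMax α ((Qbox a b).indicator ω) z ∂(Vm α)) /
      wvol α ω (Qbox a b)

end

/-!
Since `Φ ≤ 1/2` on `[0, 1/2]`, a Carleson square `Q` on which the Luxemburg norm of `f` exceeds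
`λ` satisfies `|Q|_{ω,α} ≤ 2 ∫_Q Φ(2|f|/λ) χ_{2|f| > λ} ω dV_α`. Dyadic squares are nested or
disjoint, so summing this over the maximal dyadic squares of `{M^d f > λ}` gives the weak-type
bound `|{M^d f > λ}|_{ω,α} ≤ 2 ∫ Φ(2|f|/λ) χ_{2|f| > λ} ω dV_α`. Summing these bounds at the
heights `λ = 2^k` with weights `2^{(k+1)p}` reduces the strong-type bound, pointwise in
`s = |f(z)|`, to `∑_k 2^{(k+1)p} Φ(2s/2^k) χ_{2^k < 2s} ≤ 2^{3p+1} s^p ∫_1^∞ Φ(t) t^{-p} dt/t`,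
and the last integral is finite because `Φ ∈ B_p`.
-/

open scoped Function

noncomputable section

variable {X : Type*} [MeasurableSpace X] {Φ : ℝ → ℝ} {p α l : ℝ} {ω : ℂ → ℝ} {f : ℂ → ℂ}

namespace IsNormalizedYoung

lemma nonneg (hΦ : IsNormalizedYoung Φ) {t : ℝ} (ht : 0 ≤ t) : 0 ≤ Φ t :=
  hΦ.map_zero ▸ hΦ.mono self_mem_Ici ht ht

lemma le_self_of_le_one (hΦ : IsNormalizedYoung Φ) {t : ℝ} (h0 : 0 ≤ t) (h1 : t ≤ 1) :
    Φ t ≤ t := by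
  have := hΦ.convex.2 (self_mem_Ici (a := (0 : ℝ))) (mem_Ici.2 zero_le_one)
    (sub_nonneg.2 h1) h0 (by ring)
  simpa [hΦ.map_zero, hΦ.map_one] using this

lemma measurable_comp (hΦ : IsNormalizedYoung Φ) {g : X → ℝ} (hg : Measurable g)
    (hg0 : ∀ x, 0 ≤ g x) : Measurable fun x => Φ (g x) := by
  have : Continuous fun t => Φ (max t 0) :=
    hΦ.cont.comp_continuous (continuous_id.max continuous_const) fun t => le_max_right t 0
  convert this.measurable.comp hg using 2 with x
  simp [max_eq_left (hg0 x)]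

end IsNormalizedYoung

def tailIntegral (Φ : ℝ → ℝ) (p : ℝ) : ℝ≥0∞ :=
  ∫⁻ t in Ioi 1, ENNReal.ofReal (Φ t / t ^ (p + 1))

lemma tailIntegral_lt_top (hΦ : IsNormalizedYoung Φ) (hp : 0 ≤ p + 1) (hΦp : InBp Φ p) :
    tailIntegral Φ p < ⊤ := by
  obtain ⟨-, c, hc, hfin⟩ := hΦp
  have hhead : ∫⁻ t in Ioc 1 c, ENNReal.ofReal (Φ t / t ^ (p + 1))
      ≤ ∫⁻ _ in Ioc 1 c, ENNReal.ofReal (Φ c) := by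
    refine setLIntegral_mono measurable_const fun t ht => ENNReal.ofReal_le_ofReal ?_
    have ht0 : 0 ≤ t := zero_le_one.trans ht.1.le
    calc Φ t / t ^ (p + 1) ≤ Φ t :=
          div_le_self (hΦ.nonneg ht0) (Real.one_le_rpow ht.1.le hp)
      _ ≤ Φ c := hΦ.mono ht0 hc.le ht.2
  calc tailIntegral Φ p
      ≤ ∫⁻ t in Ioc 1 c ∪ Ioi c, ENNReal.ofReal (Φ t / t ^ (p + 1)) :=
        lintegral_mono_set fun t ht => (le_or_gt t c).imp (fun h => ⟨ht, h⟩) id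
    _ ≤ _ := lintegral_union_le _ _ _
    _ < ⊤ := by
        refine ENNReal.add_lt_top.2 ⟨hhead.trans_lt ?_, hfin⟩
        rw [setLIntegral_const]
        exact ENNReal.mul_lt_top ENNReal.ofReal_lt_top measure_Ioc_lt_top

lemma ofReal_div_rpow_le_setLIntegral (hΦ : IsNormalizedYoung Φ) (hp : 0 ≤ p + 1) {u : ℝ}
    (hu : 0 < u) :
    ENNReal.ofReal (Φ u / u ^ p) ≤
      ENNReal.ofReal (2 ^ (p + 1)) * ∫⁻ t in Ioc u (2 * u), ENNReal.ofReal (Φ t / t ^ (p + 1)) := by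
  have hconst : ∀ t ∈ Ioc u (2 * u), Φ u / (2 * u) ^ (p + 1) ≤ Φ t / t ^ (p + 1) := fun t ht =>
    div_le_div₀ (hΦ.nonneg (hu.le.trans ht.1.le)) (hΦ.mono hu.le (hu.le.trans ht.1.le) ht.1.le)
      (Real.rpow_pos_of_pos (hu.trans ht.1) _) (Real.rpow_le_rpow (hu.trans ht.1).le ht.2 hp)
  calc ENNReal.ofReal (Φ u / u ^ p)
      = ENNReal.ofReal (2 ^ (p + 1)) *
          (ENNReal.ofReal (Φ u / (2 * u) ^ (p + 1)) * volume (Ioc u (2 * u))) := by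
        rw [Real.volume_Ioc, ← ENNReal.ofReal_mul (div_nonneg (hΦ.nonneg hu.le) (by positivity)),
          ← ENNReal.ofReal_mul (by positivity), Real.mul_rpow zero_le_two hu.le,
          Real.rpow_add_one hu.ne']
        congr 1
        field_simp
        ring
    _ ≤ _ := by
        rw [← setLIntegral_const]
        gcongr _ * ?_
        exact setLIntegral_mono' measurableSet_Ioc fun t ht =>
          ENNReal.ofReal_le_ofReal (hconst t ht)

def youngCutoff (Φ : ℝ → ℝ) (l s : ℝ) : ℝ≥0∞ :=
  if l < 2 * s then ENNReal.ofReal (Φ (2 * s / l)) else 0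

lemma measurable_youngCutoff (hΦ : IsNormalizedYoung Φ) (hl : 0 ≤ l) {g : X → ℝ}
    (hg : Measurable g) (hg0 : ∀ x, 0 ≤ g x) : Measurable fun x => youngCutoff Φ l (g x) :=
  Measurable.ite (measurableSet_lt measurable_const (hg.const_mul 2))
    (hΦ.measurable_comp ((hg.const_mul 2).div_const l) fun x => by have := hg0 x; positivity
      ).ennreal_ofReal measurable_const

lemma ofReal_le_inv_two_add_youngCutoff (hΦ : IsNormalizedYoung Φ) {s : ℝ} (hs : 0 ≤ s)
    (hl : 0 < l) : ENNReal.ofReal (Φ (s / l)) ≤ 2⁻¹ + youngCutoff Φ l s := by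
  unfold youngCutoff
  split_ifs with h
  · refine le_add_left (ENNReal.ofReal_le_ofReal
      (hΦ.mono (div_nonneg hs hl.le) (by positivity : (0 : ℝ) ≤ 2 * s / l) ?_))
    gcongr
    linarith
  · have hsl : s / l ≤ 2⁻¹ := by rw [div_le_iff₀ hl]; linarith
    calc ENNReal.ofReal (Φ (s / l)) ≤ ENNReal.ofReal 2⁻¹ :=
          ENNReal.ofReal_le_ofReal ((hΦ.le_self_of_le_one (by positivity) (by linarith)).trans hsl)
      _ = 2⁻¹ + 0 := by rw [add_zero, ENNReal.ofReal_inv_of_pos two_pos, ENNReal.ofReal_ofNat]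

lemma tsum_youngCutoff_le (hΦ : IsNormalizedYoung Φ) (hp : 0 ≤ p + 1) {s : ℝ} (hs : 0 ≤ s) :
    ∑' k : ℤ, ENNReal.ofReal ((2 ^ (k + 1)) ^ p) * youngCutoff Φ (2 ^ k) s ≤
      ENNReal.ofReal (4 ^ p * 2 ^ (p + 1)) * tailIntegral Φ p * ENNReal.ofReal s ^ p := by
  -- With `u = 2s/2^k` the `k`-th term is `(4s)^p Φ(u)/u^p ≲ (4s)^p ∫_u^{2u} Φ(t) t^{-p-1} dt`,
  -- and the intervals `(u, 2u]` are disjoint and lie in `(1, ∞)` whenever the term is nonzero.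
  set A : ℤ → Set ℝ := fun k => Ioc (2 * s / 2 ^ k) (2 * (2 * s / 2 ^ k))
  set g : ℝ → ℝ≥0∞ := fun t => ENNReal.ofReal (Φ t / t ^ (p + 1))
  have hA : Pairwise (Disjoint on A) := by
    refine (pairwise_disjoint_on A).2 fun k l hkl => (Set.Ioc_disjoint_Ioc_of_le ?_).symm
    have h2 : (2 : ℝ) * 2 ^ k ≤ 2 ^ l := by
      rw [← zpow_one_add₀ two_ne_zero]
      exact zpow_le_zpow_right₀ one_le_two (by omega)
    rw [mul_div_assoc', div_le_div_iff₀ (by positivity) (by positivity)]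
    nlinarith
  have hterm : ∀ k : ℤ, ENNReal.ofReal ((2 ^ (k + 1)) ^ p) * youngCutoff Φ (2 ^ k) s ≤
      ENNReal.ofReal (4 ^ p * 2 ^ (p + 1)) * ENNReal.ofReal s ^ p *
        ∫⁻ t in A k, g t ∂volume.restrict (Ioi 1) := by
    intro k
    by_cases hk : (2 : ℝ) ^ k < 2 * s
    swap
    · simp [youngCutoff, hk]
    set u := 2 * s / 2 ^ k
    have hs0 : 0 < s := by linarith [zpow_pos (two_pos : (0 : ℝ) < 2) k]
    have hu1 : 1 < u := (one_lt_div (zpow_pos (two_pos : (0 : ℝ) < 2) k)).2 hk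
    have hu0 : 0 < u := zero_lt_one.trans hu1
    have hAk : A k ⊆ Ioi 1 := fun t ht => hu1.trans ht.1
    have hcoeff : ((2 : ℝ) ^ (k + 1)) ^ p * Φ u = 4 ^ p * s ^ p * (Φ u / u ^ p) := by
      have h2k : (2 : ℝ) ^ (k + 1) = 4 * s / u := by
        simp only [u, zpow_add_one₀ (two_ne_zero' ℝ)]
        field_simp
        ring
      rw [h2k, Real.div_rpow (by positivity) hu0.le, Real.mul_rpow (by norm_num) hs]
      field_simp
    calc ENNReal.ofReal ((2 ^ (k + 1)) ^ p) * youngCutoff Φ (2 ^ k) s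
        = ENNReal.ofReal (4 ^ p * s ^ p) * ENNReal.ofReal (Φ u / u ^ p) := by
          rw [youngCutoff, if_pos hk, ← ENNReal.ofReal_mul (by positivity),
            ← ENNReal.ofReal_mul (by positivity), hcoeff]
      _ ≤ ENNReal.ofReal (4 ^ p * s ^ p) *
          (ENNReal.ofReal (2 ^ (p + 1)) * ∫⁻ t in A k, g t) := by
          gcongr
          exact ofReal_div_rpow_le_setLIntegral hΦ hp hu0
      _ = _ := by
          rw [Measure.restrict_restrict_of_subset hAk, ENNReal.ofReal_mul (by positivity),
            ENNReal.ofReal_mul (by positivity), ← ENNReal.ofReal_rpow_of_pos hs0]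
          ring
  calc _ ≤ ∑' k : ℤ, ENNReal.ofReal (4 ^ p * 2 ^ (p + 1)) * ENNReal.ofReal s ^ p *
        ∫⁻ t in A k, g t ∂volume.restrict (Ioi 1) := ENNReal.tsum_le_tsum hterm
    _ = ENNReal.ofReal (4 ^ p * 2 ^ (p + 1)) * ENNReal.ofReal s ^ p *
        ∫⁻ t in ⋃ k, A k, g t ∂volume.restrict (Ioi 1) := by
      rw [ENNReal.tsum_mul_left, lintegral_iUnion (fun k => measurableSet_Ioc) hA]
    _ ≤ ENNReal.ofReal (4 ^ p * 2 ^ (p + 1)) * ENNReal.ofReal s ^ p * tailIntegral Φ p := by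
      gcongr
      exact setLIntegral_le_lintegral _ _
    _ = _ := by ring

lemma rpow_le_tsum_ite_zpow (hp : 0 < p) (x : ℝ≥0∞) :
    x ^ p ≤ ∑' k : ℤ,
      if ENNReal.ofReal (2 ^ k) < x then ENNReal.ofReal ((2 ^ (k + 1)) ^ p) else 0 := by
  rcases eq_or_ne x ⊤ with rfl | hx
  · calc ⊤ ^ p = ∑' _ : ℕ, (1 : ℝ≥0∞) := by
          rw [ENNReal.top_rpow_of_pos hp, ENNReal.tsum_const_eq_top_of_ne_zero one_ne_zero]
      _ ≤ ∑' n : ℕ, ENNReal.ofReal ((2 ^ ((n : ℤ) + 1)) ^ p) := ENNReal.tsum_le_tsum fun n =>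
          ENNReal.one_le_ofReal.2 (Real.one_le_rpow (one_le_zpow₀ one_le_two (by omega)) hp.le)
      _ ≤ _ := by
          simp only [ENNReal.ofReal_lt_top, if_true]
          exact ENNReal.tsum_comp_le_tsum_of_injective Nat.cast_injective
            fun k : ℤ => ENNReal.ofReal ((2 ^ (k + 1)) ^ p)
  rcases eq_or_ne x 0 with rfl | hx0
  · simp [ENNReal.zero_rpow_of_pos hp]
  obtain ⟨k, hk, hk1⟩ := exists_mem_Ioc_zpow (ENNReal.toReal_pos hx0 hx) one_lt_two
  refine le_trans ?_ (ENNReal.le_tsum k)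
  rw [if_pos ((ENNReal.ofReal_lt_iff_lt_toReal (by positivity) hx).2 hk),
    ← ENNReal.ofReal_rpow_of_nonneg (by positivity) hp.le]
  exact ENNReal.rpow_le_rpow ((ENNReal.le_ofReal_iff_toReal_le hx (by positivity)).2 hk1) hp.le

lemma lintegral_rpow_le_tsum_measure {ν : Measure X} {F : X → ℝ≥0∞} (hF : Measurable F)
    (hp : 0 < p) :
    ∫⁻ x, F x ^ p ∂ν ≤
      ∑' k : ℤ, ENNReal.ofReal ((2 ^ (k + 1)) ^ p) * ν {x | ENNReal.ofReal (2 ^ k) < F x} := by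
  have hmeas : ∀ k : ℤ, MeasurableSet {x | ENNReal.ofReal (2 ^ k) < F x} := fun _ =>
    measurableSet_lt measurable_const hF
  calc ∫⁻ x, F x ^ p ∂ν
      ≤ ∫⁻ x, ∑' k : ℤ, {x | ENNReal.ofReal (2 ^ k) < F x}.indicator
          (fun _ => ENNReal.ofReal ((2 ^ (k + 1)) ^ p)) x ∂ν :=
        lintegral_mono fun x => by
          simpa only [indicator_apply, mem_ofPred_eq] using rpow_le_tsum_ite_zpow hp (F x)
    _ = _ := by
        rw [lintegral_tsum fun k => (measurable_const.indicator (hmeas k)).aemeasurable]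
        simp only [lintegral_indicator_const (hmeas _)]

theorem measure_sUnion_le_of_nested {μ ρ : Measure X} {𝒞 : Set (Set X)} (h𝒞 : 𝒞.Countable)
    (hmeas : ∀ A ∈ 𝒞, MeasurableSet A)
    (hnest : ∀ A ∈ 𝒞, ∀ B ∈ 𝒞, Disjoint A B ∨ A ⊆ B ∨ B ⊆ A)
    (hmax : ∀ A ∈ 𝒞, ∃ B ∈ 𝒞, A ⊆ B ∧ ∀ C ∈ 𝒞, B ⊆ C → C = B)
    (hle : ∀ A ∈ 𝒞, μ A ≤ ρ A) : μ (⋃₀ 𝒞) ≤ ρ (⋃₀ 𝒞) := by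
  set M := {B ∈ 𝒞 | ∀ C ∈ 𝒞, B ⊆ C → C = B}
  have hM : M.Countable := h𝒞.mono (sep_subset _ _)
  have hunion : ⋃₀ M = ⋃₀ 𝒞 := by
    refine (sUnion_mono (sep_subset _ _)).antisymm (sUnion_subset fun A hA => ?_)
    obtain ⟨B, hB, hAB, hBmax⟩ := hmax A hA
    exact hAB.trans (subset_sUnion_of_mem ⟨hB, hBmax⟩)
  have hdisj : M.Pairwise Disjoint := fun A hA B hB hAB =>
    (hnest A hA.1 B hB.1).resolve_right <| by
      rintro (h | h)
      exacts [hAB (hA.2 B hB.1 h).symm, hAB (hB.2 A hA.1 h)]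
  calc μ (⋃₀ 𝒞) = μ (⋃₀ M) := by rw [hunion]
    _ ≤ ∑' A : M, μ A := by rw [sUnion_eq_biUnion]; exact measure_biUnion_le μ hM id
    _ ≤ ∑' A : M, ρ A := ENNReal.tsum_le_tsum fun A => hle A A.2.1
    _ = ρ (⋃₀ 𝒞) := by rw [← hunion, measure_sUnion hM hdisj fun A hA => hmeas A hA.1]

def dyadicInterval (a : ℤ × ℤ) : ℝ × ℝ := (2 ^ a.1 * a.2, 2 ^ a.1 * (a.2 + 1))

def dyadicSquare (a : ℤ × ℤ) : Set ℂ := Qbox (dyadicInterval a).1 (dyadicInterval a).2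

lemma dyadicGrid_zero : dyadicGrid 0 = range dyadicInterval := by
  ext ⟨x, y⟩
  simp [dyadicGrid, dyadicInterval, eq_comm]

lemma measurableSet_Qbox (a b : ℝ) : MeasurableSet (Qbox a b) :=
  (Complex.measurable_re measurableSet_Ioo).inter (Complex.measurable_im measurableSet_Ioo)

lemma mem_dyadicSquare {j m : ℤ} {z : ℂ} :
    z ∈ dyadicSquare (j, m) ↔
      (2 ^ j * m < z.re ∧ z.re < 2 ^ j * (m + 1)) ∧ 0 < z.im ∧ z.im < (2 : ℝ) ^ j := by
  simp [dyadicSquare, dyadicInterval, Qbox, mul_add]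

lemma dyadicSquare_nonempty (a : ℤ × ℤ) : (dyadicSquare a).Nonempty :=
  ⟨⟨2 ^ a.1 * (a.2 + 2⁻¹), 2 ^ a.1 / 2⟩, by
    rw [mem_dyadicSquare]
    have : (0 : ℝ) < 2 ^ a.1 := by positivity
    refine ⟨⟨?_, ?_⟩, ?_, ?_⟩ <;> dsimp only <;> nlinarith⟩

lemma dyadicSquare_subset_of_le {a b : ℤ × ℤ} (hab : a.1 ≤ b.1)
    (h : ¬Disjoint (dyadicSquare a) (dyadicSquare b)) : dyadicSquare a ⊆ dyadicSquare b := by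
  obtain ⟨j, m⟩ := a
  obtain ⟨i, n⟩ := b
  obtain ⟨z, hza, hzb⟩ := not_disjoint_iff.1 h
  obtain ⟨N, rfl⟩ : ∃ N : ℕ, i = j + N := ⟨(i - j).toNat, by dsimp at hab; omega⟩
  rw [mem_dyadicSquare] at hza hzb
  have h2j : (0 : ℝ) < 2 ^ j := by positivity
  have hi : (2 : ℝ) ^ (j + N : ℤ) = 2 ^ j * (2 ^ N : ℤ) := by
    rw [zpow_add₀ two_ne_zero]; norm_cast
  rw [hi] at hzb
  have hlo : 2 ^ N * n ≤ m := by
    rw [← Int.lt_add_one_iff, ← Int.cast_lt (R := ℝ)]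
    push_cast at hzb ⊢
    nlinarith
  have hhi : m + 1 ≤ 2 ^ N * (n + 1) := by
    rw [Int.add_one_le_iff, ← Int.cast_lt (R := ℝ)]
    push_cast at hzb ⊢
    nlinarith
  have hN : 1 ≤ (2 : ℤ) ^ N := one_le_pow₀ one_le_two
  intro w hw
  rw [mem_dyadicSquare] at hw ⊢
  rw [hi]
  replace hlo := (Int.cast_le (R := ℝ)).2 hlo
  replace hhi := (Int.cast_le (R := ℝ)).2 hhi
  replace hN := (Int.cast_le (R := ℝ)).2 hN
  push_cast at hlo hhi hN ⊢
  refine ⟨⟨?_, ?_⟩, hw.2.1, ?_⟩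
  · nlinarith
  · nlinarith
  · nlinarith

lemma dyadicSquare_disjoint_or_subset (a b : ℤ × ℤ) :
    Disjoint (dyadicSquare a) (dyadicSquare b) ∨
      dyadicSquare a ⊆ dyadicSquare b ∨ dyadicSquare b ⊆ dyadicSquare a := by
  by_cases h : Disjoint (dyadicSquare a) (dyadicSquare b)
  · exact Or.inl h
  rcases le_total a.1 b.1 with hab | hba
  · exact Or.inr (Or.inl (dyadicSquare_subset_of_le hab h))
  · exact Or.inr (Or.inr (dyadicSquare_subset_of_le hba (mt disjoint_comm.1 h)))

lemma exists_maximal_dyadicSquare {S : Set (ℤ × ℤ)} {N : ℤ} (hS : ∀ b ∈ S, b.1 ≤ N) {a : ℤ × ℤ}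
    (ha : a ∈ S) : ∃ b ∈ S, dyadicSquare a ⊆ dyadicSquare b ∧
      ∀ c ∈ S, dyadicSquare b ⊆ dyadicSquare c → dyadicSquare c = dyadicSquare b := by
  classical
  obtain ⟨_, ⟨b, hb, hab, rfl⟩, hgreatest⟩ := Int.exists_greatest_of_bdd
    (P := fun i => ∃ b ∈ S, dyadicSquare a ⊆ dyadicSquare b ∧ b.1 = i)
    ⟨N, fun _ ⟨b, hb, _, hi⟩ => hi ▸ hS b hb⟩ ⟨a.1, a, ha, subset_rfl, rfl⟩
  refine ⟨b, hb, hab, fun c hc hbc => (dyadicSquare_subset_of_le ?_ ?_).antisymm hbc⟩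
  · exact hgreatest c.1 ⟨c, hc, hab.trans hbc, rfl⟩
  · rw [not_disjoint_iff_nonempty_inter, inter_eq_right.2 hbc]
    exact dyadicSquare_nonempty b

theorem measure_biUnion_dyadicSquare_le {μ ρ : Measure ℂ} {S : Set (ℤ × ℤ)}
    (hle : ∀ a ∈ S, μ (dyadicSquare a) ≤ ρ (dyadicSquare a)) :
    μ (⋃ a ∈ S, dyadicSquare a) ≤ ρ (⋃ a ∈ S, dyadicSquare a) := by
  -- Maximal squares exist once the levels are bounded; then let the bound tend to infinity.
  set T : ℕ → Set (ℤ × ℤ) := fun N => {a ∈ S | a.1 ≤ N}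
  have hT : ∀ N, μ (⋃ a ∈ T N, dyadicSquare a) ≤ ρ (⋃ a ∈ S, dyadicSquare a) := by
    intro N
    rw [← sUnion_image]
    refine (measure_sUnion_le_of_nested ((T N).to_countable.image _) ?_ ?_ ?_ ?_).trans
      (measure_mono ?_)
    · rintro _ ⟨a, -, rfl⟩
      exact measurableSet_Qbox _ _
    · rintro _ ⟨a, -, rfl⟩ _ ⟨b, -, rfl⟩
      exact dyadicSquare_disjoint_or_subset a b
    · rintro _ ⟨a, ha, rfl⟩
      obtain ⟨b, hb, hab, hbmax⟩ := exists_maximal_dyadicSquare (fun b hb => hb.2) ha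
      exact ⟨_, mem_image_of_mem _ hb, hab, by rintro _ ⟨c, hc, rfl⟩; exact hbmax c hc⟩
    · rintro _ ⟨a, ha, rfl⟩
      exact hle a ha.1
    · rw [sUnion_image]
      exact biUnion_mono (sep_subset _ _) fun _ _ => subset_rfl
  have hunion : ⋃ a ∈ S, dyadicSquare a = ⋃ N : ℕ, ⋃ a ∈ T N, dyadicSquare a := by
    refine (iUnion₂_subset fun a ha => ?_).antisymm
      (iUnion_subset fun N => biUnion_mono (sep_subset _ _) fun _ _ => subset_rfl)
    exact subset_iUnion_of_subset a.1.toNat (subset_iUnion₂_of_subset a ⟨ha, by omega⟩ subset_rfl)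
  have hmono : Monotone fun N : ℕ => ⋃ a ∈ T N, dyadicSquare a := fun N N' hNN' =>
    biUnion_mono (fun a ha => ⟨ha.1, ha.2.trans (by exact_mod_cast hNN')⟩) fun _ _ => subset_rfl
  rw [hunion, hmono.measure_iUnion, ← hunion]
  exact iSup_le hT

instance Vm.instSFinite (α : ℝ) : SFinite (Vm α) := by
  unfold Vm
  infer_instance

def weightedVm (α : ℝ) (ω : ℂ → ℝ) : Measure ℂ :=
  (Vm α).withDensity fun z => ENNReal.ofReal (ω z)

instance weightedVm.instSFinite (α : ℝ) (ω : ℂ → ℝ) : SFinite (weightedVm α ω) := by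
  unfold weightedVm
  infer_instance

lemma weightedVm_apply (s : Set ℂ) : weightedVm α ω s = wvol α ω s :=
  withDensity_apply' _ s

lemma lintegral_weightedVm (hω : Measurable ω) (g : ℂ → ℝ≥0∞) :
    ∫⁻ z, g z ∂weightedVm α ω = ∫⁻ z, ENNReal.ofReal (ω z) * g z ∂Vm α :=
  lintegral_withDensity_eq_lintegral_mul_non_measurable _ hω.ennreal_ofReal
    (ae_of_all _ fun _ => ENNReal.ofReal_lt_top) g

lemma setLIntegral_weightedVm (hω : Measurable ω) (g : ℂ → ℝ≥0∞) {s : Set ℂ}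
    (hs : MeasurableSet s) :
    ∫⁻ z in s, g z ∂weightedVm α ω = ∫⁻ z in s, ENNReal.ofReal (ω z) * g z ∂Vm α :=
  setLIntegral_withDensity_eq_setLIntegral_mul_non_measurable _ hω.ennreal_ofReal g hs
    (ae_of_all _ fun _ => ENNReal.ofReal_lt_top)

lemma dyadicMax_zero_eq (z : ℂ) :
    dyadicMax 0 α Φ ω f z = ⨆ (a : ℤ × ℤ) (_ : z ∈ dyadicSquare a),
      luxNorm α Φ ω (dyadicInterval a).1 (dyadicInterval a).2 f := by
  rw [dyadicMax, dyadicGrid_zero, iSup_range]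
  rfl

lemma measurable_dyadicMax_zero : Measurable (dyadicMax 0 α Φ ω f) := by
  classical
  simp only [funext dyadicMax_zero_eq, iSup_eq_if]
  exact Measurable.iSup fun a =>
    Measurable.ite (measurableSet_Qbox _ _) measurable_const measurable_const

lemma luxNorm_le_of_two_mul_setLIntegral_youngCutoff_le (hΦ : IsNormalizedYoung Φ)
    (hω : Measurable ω) {a b : ℝ} (hl : 0 < l)
    (h : 2 * ∫⁻ z in Qbox a b, youngCutoff Φ l ‖f z‖ ∂weightedVm α ω ≤ wvol α ω (Qbox a b)) :
    luxNorm α Φ ω a b f ≤ ENNReal.ofReal l := by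
  refine iInf₂_le_of_le l hl (iInf_le_of_le (ENNReal.div_le_of_le_mul ?_) le_rfl)
  rw [one_mul, ← weightedVm_apply]
  rw [← weightedVm_apply, mul_comm, ← ENNReal.le_div_iff_mul_le (by simp) (by simp)] at h
  calc ∫⁻ z in Qbox a b, ENNReal.ofReal (Φ (‖f z‖ / l) * ω z) ∂Vm α
      = ∫⁻ z in Qbox a b, ENNReal.ofReal (Φ (‖f z‖ / l)) ∂weightedVm α ω := by
        rw [setLIntegral_weightedVm hω _ (measurableSet_Qbox a b)]
        refine lintegral_congr fun z => ?_
        rw [ENNReal.ofReal_mul (hΦ.nonneg (by positivity)), mul_comm]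
    _ ≤ ∫⁻ z in Qbox a b, (2⁻¹ + youngCutoff Φ l ‖f z‖) ∂weightedVm α ω :=
        lintegral_mono fun z => ofReal_le_inv_two_add_youngCutoff hΦ (norm_nonneg _) hl
    _ ≤ weightedVm α ω (Qbox a b) / 2 + weightedVm α ω (Qbox a b) / 2 := by
        rw [lintegral_add_left measurable_const, setLIntegral_const, ← ENNReal.div_eq_inv_mul]
        gcongr
    _ = weightedVm α ω (Qbox a b) := ENNReal.add_halves _

theorem weightedVm_dyadicMax_gt_le (hΦ : IsNormalizedYoung Φ) (hω : Measurable ω) (hl : 0 < l) :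
    weightedVm α ω {z | ENNReal.ofReal l < dyadicMax 0 α Φ ω f z} ≤
      2 * ∫⁻ z, youngCutoff Φ l ‖f z‖ ∂weightedVm α ω := by
  set S := {a : ℤ × ℤ |
    ENNReal.ofReal l < luxNorm α Φ ω (dyadicInterval a).1 (dyadicInterval a).2 f}
  set ρ := (weightedVm α ω).withDensity fun z => 2 * youngCutoff Φ l ‖f z‖
  have hcover : {z | ENNReal.ofReal l < dyadicMax 0 α Φ ω f z} ⊆ ⋃ a ∈ S, dyadicSquare a := by
    intro z hz
    simp only [mem_ofPred_eq, dyadicMax_zero_eq, lt_iSup_iff] at hz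
    obtain ⟨a, hza, ha⟩ := hz
    exact mem_biUnion ha hza
  have hsquare : ∀ a ∈ S, weightedVm α ω (dyadicSquare a) ≤ ρ (dyadicSquare a) := by
    intro a ha
    rw [withDensity_apply' _, lintegral_const_mul' _ _ ENNReal.ofNat_ne_top, weightedVm_apply]
    exact (not_le.1 fun h =>
      (luxNorm_le_of_two_mul_setLIntegral_youngCutoff_le hΦ hω hl h).not_gt ha).le
  calc _ ≤ weightedVm α ω (⋃ a ∈ S, dyadicSquare a) := measure_mono hcover
    _ ≤ ρ (⋃ a ∈ S, dyadicSquare a) := measure_biUnion_dyadicSquare_le hsquare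
    _ ≤ ρ univ := measure_mono (subset_univ _)
    _ = _ := by
      rw [withDensity_apply' _, Measure.restrict_univ,
        lintegral_const_mul' _ _ ENNReal.ofNat_ne_top]

theorem lintegral_dyadicMax_rpow_le (hΦ : IsNormalizedYoung Φ) (hp : 0 < p) (hω : Measurable ω)
    (hf : Measurable f) :
    ∫⁻ z, dyadicMax 0 α Φ ω f z ^ p * ENNReal.ofReal (ω z) ∂Vm α ≤
      2 * (ENNReal.ofReal (4 ^ p * 2 ^ (p + 1)) * tailIntegral Φ p) * lpInt α p ω f := by
  set ν := weightedVm α ω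
  have hcutoff : ∀ k : ℤ, Measurable fun z => youngCutoff Φ (2 ^ k) ‖f z‖ := fun k =>
    measurable_youngCutoff hΦ (by positivity) hf.norm fun _ => norm_nonneg _
  calc ∫⁻ z, dyadicMax 0 α Φ ω f z ^ p * ENNReal.ofReal (ω z) ∂Vm α
      = ∫⁻ z, dyadicMax 0 α Φ ω f z ^ p ∂ν := by
        rw [lintegral_weightedVm hω]
        exact lintegral_congr fun z => mul_comm _ _
    _ ≤ ∑' k : ℤ, ENNReal.ofReal ((2 ^ (k + 1)) ^ p) *
          ν {z | ENNReal.ofReal (2 ^ k) < dyadicMax 0 α Φ ω f z} :=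
        lintegral_rpow_le_tsum_measure measurable_dyadicMax_zero hp
    _ ≤ ∑' k : ℤ, ENNReal.ofReal ((2 ^ (k + 1)) ^ p) *
          (2 * ∫⁻ z, youngCutoff Φ (2 ^ k) ‖f z‖ ∂ν) := by
        gcongr with k
        exact weightedVm_dyadicMax_gt_le hΦ hω (by positivity)
    _ = 2 * ∫⁻ z, ∑' k : ℤ, ENNReal.ofReal ((2 ^ (k + 1)) ^ p) *
          youngCutoff Φ (2 ^ k) ‖f z‖ ∂ν := by
        rw [lintegral_tsum fun k => ((hcutoff k).const_mul _).aemeasurable,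
          ← ENNReal.tsum_mul_left]
        simp only [lintegral_const_mul _ (hcutoff _), mul_left_comm]
    _ ≤ 2 * ∫⁻ z, ENNReal.ofReal (4 ^ p * 2 ^ (p + 1)) * tailIntegral Φ p *
          ENNReal.ofReal ‖f z‖ ^ p ∂ν := by
        gcongr with z
        exact tsum_youngCutoff_le hΦ (by linarith) (norm_nonneg _)
    _ = _ := by
        rw [lintegral_const_mul _ (hf.norm.ennreal_ofReal.pow_const p), lintegral_weightedVm hω,
          lpInt]
        simp only [mul_comm (ENNReal.ofReal (ω _))]
        ring

end

/-- Lemma 2.4: for `Φ ∈ B_p` there is `C > 0` depending only on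
`p` and `Φ` with `‖M^d_{Φ,ω,α} f‖_{L^p(ω dV_α)} ≤ C ‖f‖_{L^p(ω dV_α)}`. -/
theorem statement10 (p : ℝ) (hp : 1 < p)
    (Φ : ℝ → ℝ) (hΦ : IsNormalizedYoung Φ) (hΦp : InBp Φ p) :
    ∃ C : ℝ, 0 < C ∧ ∀ α : ℝ, -1 < α → ∀ ω : ℂ → ℝ, IsWeight α ω →
      ∀ f : ℂ → ℂ, Measurable f → HasCompactSupport f →
      (∫⁻ z, (dyadicMax 0 α Φ ω f z) ^ p * ENNReal.ofReal (ω z) ∂(Vm α)) ^ (1 / p)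
        ≤ ENNReal.ofReal C * (lpInt α p ω f) ^ (1 / p) := by
  have hp0 : 0 < p := zero_lt_one.trans hp
  set C₀ := 2 * (ENNReal.ofReal (4 ^ p * 2 ^ (p + 1)) * tailIntegral Φ p)
  have hC₀ : C₀ ^ (1 / p) ≠ ⊤ := ENNReal.rpow_ne_top_of_nonneg (by positivity) <|
    ENNReal.mul_ne_top ENNReal.ofNat_ne_top <| ENNReal.mul_ne_top ENNReal.ofReal_ne_top
      (tailIntegral_lt_top hΦ (by linarith) hΦp).ne
  refine ⟨(C₀ ^ (1 / p)).toReal + 1, by positivity, fun α _ ω hω f hf _ => ?_⟩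
  calc _ ≤ (C₀ * lpInt α p ω f) ^ (1 / p) := by
        gcongr
        exact lintegral_dyadicMax_rpow_le hΦ hp0 hω.1 hf
    _ = C₀ ^ (1 / p) * lpInt α p ω f ^ (1 / p) := ENNReal.mul_rpow_of_nonneg _ _ (by positivity)
    _ ≤ _ := by
        gcongr
        exact (ENNReal.le_ofReal_iff_toReal_le hC₀ (by positivity)).2 (by linarith)
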